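/- For μ > 0 and any t₀ > 0 with t₀ ≠ 1/μ, the pointwise limit N²·(t₀^{N−2}/(N−2)!)·(μN)^{N−2}·e^{−μN t₀} → 0 as N → ∞; indeed the expression decays faster than any power of 1/N. -/
import Mathlib


open Filter

/-- The memory-kernel profile `f_N(t) = N²·(t^(N−2)/(N−2)!)·(μN)^(N−2)·e^(−μNt)`. -/
noncomputable def fN (μ : ℝ) (N : ℕ) (t : ℝ) : ℝ :=
  (N : ℝ)^2 * (t^(N-2) / (Nat.factorial (N-2))) * (μ * N)^(N-2) * Real.exp (-μ * N * t)

lemma pow_self_le_exp_mul_factorial (m : ℕ) :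
    ((m : ℝ))^m ≤ Real.exp m * (Nat.factorial m : ℝ) := by
  have hx : (0:ℝ) ≤ (m:ℝ) := by positivity
  have h1 : ((m:ℝ))^m / (Nat.factorial m : ℝ) ≤ Real.exp m := by
    refine le_trans ?_ (Real.sum_le_exp_of_nonneg hx (m+1))
    have := Finset.single_le_sum (f := fun i => (m:ℝ)^i / (Nat.factorial i : ℝ))
      (fun i _ => by positivity) (Finset.self_mem_range_succ m)
    simpa using this
  have hf : (0:ℝ) < (Nat.factorial m : ℝ) := by
    exact_mod_cast m.factorial_pos
  calc ((m:ℝ))^m = ((m:ℝ))^m / (Nat.factorial m : ℝ) * (Nat.factorial m : ℝ) := by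
        field_simp
    _ ≤ Real.exp m * (Nat.factorial m : ℝ) :=
        mul_le_mul_of_nonneg_right h1 hf.le

/-- For `μ > 0` and fixed `t₀ > 0` with `μt₀ ≠ 1`, the kernel values `f_N(t₀)` tend to `0`
as `N → ∞`, and indeed decay faster than any power of `1/N`. -/
theorem stmt_15 (μ t₀ : ℝ) (hμ : 0 < μ) (ht₀ : 0 < t₀) (hne : μ * t₀ ≠ 1) :
    Tendsto (fun N : ℕ => fN μ N t₀) atTop (nhds 0) ∧
    ∀ k : ℕ, Tendsto (fun N : ℕ => (N : ℝ)^k * fN μ N t₀) atTop (nhds 0) := by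
  set c : ℝ := μ * t₀ with hc
  have hc0 : 0 < c := mul_pos hμ ht₀
  have hgc : c * Real.exp (1 - c) < 1 := by
    have h := Real.add_one_lt_exp (x := c - 1) (by
      intro h
      exact hne (by linarith [sub_eq_zero.mp h]))
    have hlt : c < Real.exp (c - 1) := by linarith
    calc c * Real.exp (1 - c) < Real.exp (c - 1) * Real.exp (1 - c) :=
          mul_lt_mul_of_pos_right hlt (Real.exp_pos _)
      _ = 1 := by rw [← Real.exp_add]; norm_num
  have hgc0 : 0 ≤ c * Real.exp (1 - c) := by positivity
  set r : ℝ := (c * Real.exp (1 - c) + 1) / 2 with hr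
  have hr0 : 0 < r := by rw [hr]; linarith
  have hr1 : r < 1 := by rw [hr]; linarith
  have hgcr : c * Real.exp (1 - c) < r := by rw [hr]; linarith
  -- the map N ↦ c·N/(N-2) tends to c
  have hsub : Tendsto (fun N : ℕ => ((N:ℝ) - 2)) atTop atTop := by
    have := tendsto_atTop_add_const_right atTop (-2 : ℝ) tendsto_natCast_atTop_atTop
    simpa [sub_eq_add_neg] using this
  have hx_tendsto : Tendsto (fun N : ℕ => c * N / ((N:ℝ) - 2)) atTop (nhds c) := by
    have h1 : Tendsto (fun N : ℕ => c + 2 * c / ((N:ℝ) - 2)) atTop (nhds (c + 0)) :=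
      tendsto_const_nhds.add (tendsto_const_nhds.div_atTop hsub)
    rw [add_zero] at h1
    refine h1.congr' ?_
    filter_upwards [eventually_ge_atTop 3] with N hN
    have hN2 : (0:ℝ) < (N:ℝ) - 2 := by
      have : (3:ℝ) ≤ (N:ℝ) := by exact_mod_cast hN
      linarith
    field_simp
    ring
  have hg_tendsto : Tendsto
      (fun N : ℕ => (c * N / ((N:ℝ) - 2)) * Real.exp (1 - c * N / ((N:ℝ) - 2)))
      atTop (nhds (c * Real.exp (1 - c))) := by
    have hcont : Continuous (fun x : ℝ => x * Real.exp (1 - x)) := by continuity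
    exact (hcont.tendsto c).comp hx_tendsto
  have hev : ∀ᶠ N : ℕ in atTop,
      (c * N / ((N:ℝ) - 2)) * Real.exp (1 - c * N / ((N:ℝ) - 2)) ≤ r :=
    (hg_tendsto.eventually_lt_const hgcr).mono fun _ h => h.le
  have main : ∀ k : ℕ, Tendsto (fun N : ℕ => (N : ℝ)^k * fN μ N t₀) atTop (nhds 0) := by
    intro k
    have hbound : ∀ᶠ N : ℕ in atTop,
        (N:ℝ)^k * fN μ N t₀ ≤ (r⁻¹)^2 * ((N:ℝ)^(k+2) * r^N) := by
      filter_upwards [hev, eventually_ge_atTop 3] with N hgN hN3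
      set m : ℕ := N - 2 with hm
      have hmN : (m:ℝ) = (N:ℝ) - 2 := by
        rw [hm]
        push_cast [Nat.cast_sub (by omega : 2 ≤ N)]
        ring
      have hN2 : (0:ℝ) < (N:ℝ) - 2 := by
        have : (3:ℝ) ≤ (N:ℝ) := by exact_mod_cast hN3
        linarith
      have hm0 : (0:ℝ) < (m:ℝ) := by rw [hmN]; exact hN2
      have hN0 : (0:ℝ) < (N:ℝ) := by positivity
      set x : ℝ := c * N / ((N:ℝ) - 2) with hxdef
      have hx0 : 0 < x := by positivity
      have hfact : (0:ℝ) < (Nat.factorial m : ℝ) := by exact_mod_cast m.factorial_pos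
      -- rewrite fN
      have e1 : fN μ N t₀ = (N:ℝ)^2 * ((c * N)^m * Real.exp (-(c * (N:ℝ)))) /
          (Nat.factorial m : ℝ) := by
        show (N : ℝ)^2 * (t₀^(N-2) / (Nat.factorial (N-2))) * (μ * N)^(N-2)
            * Real.exp (-μ * N * t₀) = _
        rw [show (N - 2 : ℕ) = m from rfl]
        rw [show -μ * (N:ℝ) * t₀ = -(c * (N:ℝ)) by rw [hc]; ring]
        rw [show (c * (N:ℝ))^m = t₀^m * (μ * (N:ℝ))^m by
          rw [← mul_pow]; congr 1; rw [hc]; ring]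
        ring
      -- the key comparison with (x e^{1-x})^m
      have e2 : (N:ℝ)^2 * (x * Real.exp (1 - x))^m
          = (N:ℝ)^2 * ((c * N)^m * Real.exp (-(c * (N:ℝ)))) *
            (Real.exp m / ((m:ℝ))^m) := by
        have harg : (m:ℝ) * (1 - x) = (m:ℝ) + (-(c * (N:ℝ))) := by
          rw [hxdef, hmN]
          field_simp
          ring
        rw [mul_pow, ← Real.exp_nat_mul, harg, Real.exp_add,
          show x^m = (c * N)^m / ((m:ℝ))^m by
            rw [← div_pow]; congr 1; rw [hxdef, hmN]]
        field_simp
      have hdiv : (1:ℝ) / (Nat.factorial m : ℝ) ≤ Real.exp m / ((m:ℝ))^m := by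
        rw [div_le_div_iff₀ hfact (by positivity)]
        have := pow_self_le_exp_mul_factorial m
        linarith
      have hA : (0:ℝ) ≤ (N:ℝ)^2 * ((c * N)^m * Real.exp (-(c * (N:ℝ)))) := by positivity
      have step1 : fN μ N t₀ ≤ (N:ℝ)^2 * (x * Real.exp (1 - x))^m := by
        rw [e1, e2]
        calc (N:ℝ)^2 * ((c * N)^m * Real.exp (-(c * (N:ℝ)))) / (Nat.factorial m : ℝ)
            = (N:ℝ)^2 * ((c * N)^m * Real.exp (-(c * (N:ℝ)))) *
              ((1:ℝ) / (Nat.factorial m : ℝ)) := by ring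
          _ ≤ _ := mul_le_mul_of_nonneg_left hdiv hA
      have step2 : (N:ℝ)^2 * (x * Real.exp (1 - x))^m ≤ (N:ℝ)^2 * r^m := by
        refine mul_le_mul_of_nonneg_left ?_ (by positivity)
        exact pow_le_pow_left₀ (by positivity) hgN m
      have hrm : r^m = (r⁻¹)^2 * r^N := by
        have : r^N = r^m * r^2 := by
          rw [← pow_add]; congr 1; omega
        rw [this]
        field_simp
      calc (N:ℝ)^k * fN μ N t₀ ≤ (N:ℝ)^k * ((N:ℝ)^2 * r^m) := by
            refine mul_le_mul_of_nonneg_left (step1.trans step2) (by positivity)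
        _ = (r⁻¹)^2 * ((N:ℝ)^(k+2) * r^N) := by rw [hrm, pow_add]; ring
    have hlim : Tendsto (fun N : ℕ => (r⁻¹)^2 * ((N:ℝ)^(k+2) * r^N)) atTop (nhds 0) := by
      have h := tendsto_pow_const_mul_const_pow_of_abs_lt_one (k+2)
        (r := r) (by rw [abs_of_pos hr0]; exact hr1)
      simpa only [mul_zero] using h.const_mul ((r⁻¹)^2)
    refine tendsto_of_tendsto_of_tendsto_of_le_of_le' tendsto_const_nhds hlim ?_ hbound
    filter_upwards with N
    have h1 : 0 ≤ fN μ N t₀ := by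
      unfold fN
      positivity
    positivity
  refine ⟨?_, main⟩
  have := main 0
  simpa using this
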